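/- arXiv:1811.12429 — 3 statements merged into one kernel-verified Lean document; each statement's English description precedes it below -/
import Mathlib

section
/- Let xs < xt be integers, C ≥ 0 a real number, and f : ℤ → ℝ a function satisfying the Ameso(C) condition on [xs,xt]. Suppose there exist x0 ∈ [xs,xt] and a positive integer b with x0 + b ≤ xt such that (a) f(x0) = min over y ∈ [xs, x0+b] of f(y), and (b) f(x0) + C ≤ max over y ∈ [x0, x0+b] of f(y). Then f(x0) = min over y ∈ [xs, xt] of f(y). -/
/-!
Let `y` lie to the right of the window `[xs, x0 + b]`, take the largest maximiser `M` of `f`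
on `[x0, y)`, and note `f M ≥ f x0 + C` by (b) and `M ≠ x0` by (a) at `x0 + 1`. The Ameso
inequality at the pair `x0, 2M - x0`, whose midpoint is `M`, forbids `2M - x0 < y`, because
every point of `(M, y)` is strictly below `f M`. Hence the reflection `2M - y` of `y` through
`M` lies in `[x0, y)`, and the Ameso inequality at the pair `2M - y, y` gives
`f y ≥ f M - C ≥ f x0`.
-/

/-- Ceiling of `(x+y)/2` as a rational. -/
def mceil (x y : ℤ) : ℤ := ⌈((x : ℚ) + (y : ℚ)) / 2⌉

/-- Floor of `(x+y)/2` as a rational. -/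
def mfloor (x y : ℤ) : ℤ := ⌊((x : ℚ) + (y : ℚ)) / 2⌋

lemma mceil_of_add_eq_two_mul {x y M : ℤ} (h : x + y = 2 * M) : mceil x y = M := by
  rw [mceil, show ((x : ℚ) + y) / 2 = M by rw [← Int.cast_add, h]; push_cast; ring,
    Int.ceil_intCast]

lemma mfloor_of_add_eq_two_mul {x y M : ℤ} (h : x + y = 2 * M) : mfloor x y = M := by
  rw [mfloor, show ((x : ℚ) + y) / 2 = M by rw [← Int.cast_add, h]; push_cast; ring,
    Int.floor_intCast]

lemma Finset.exists_greatest_argmax {α β : Type*} [LinearOrder α] [LinearOrder β]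
    {s : Finset α} (hs : s.Nonempty) (f : α → β) :
    ∃ M ∈ s, ∀ z ∈ s, f z ≤ f M ∧ (M < z → f z < f M) := by
  obtain ⟨M, hM, hmax⟩ := s.exists_max_image (fun z => toLex (f z, z)) hs
  refine ⟨M, hM, fun z hz => ?_⟩
  rcases Prod.Lex.toLex_le_toLex.1 (hmax z hz) with hlt | ⟨heq, hle⟩
  · exact ⟨hlt.le, fun _ => hlt⟩
  · exact ⟨heq.le, fun h => absurd hle (not_le.2 h)⟩

def AmesoOn (C : ℝ) (f : ℤ → ℝ) (s : Set ℤ) : Prop :=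
  ∀ x ∈ s, ∀ y ∈ s, f x + f y + C ≥ f (mceil x y) + f (mfloor x y)

namespace AmesoOn

variable {C : ℝ} {f : ℤ → ℝ}

lemma mono {s t : Set ℤ} (hf : AmesoOn C f t) (hst : s ⊆ t) : AmesoOn C f s :=
  fun x hx y hy => hf x (hst hx) y (hst hy)

lemma two_mul_le {s : Set ℤ} (hf : AmesoOn C f s) {x y M : ℤ} (hx : x ∈ s) (hy : y ∈ s)
    (hxy : x + y = 2 * M) : 2 * f M ≤ f x + f y + C := by
  have := hf x hx y hy
  rw [mceil_of_add_eq_two_mul hxy, mfloor_of_add_eq_two_mul hxy] at this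
  linarith

lemma apply_left_le_apply_right {a y m : ℤ} (hf : AmesoOn C f (Set.Icc a y)) (hay : a + 2 ≤ y)
    (hstep : f a ≤ f (a + 1)) (hm : m ∈ Finset.Ico a y) (hfm : f a + C ≤ f m) :
    f a ≤ f y := by
  obtain ⟨M, hM, hMmax⟩ := Finset.exists_greatest_argmax ⟨m, hm⟩ f
  rw [Finset.mem_Ico] at hM
  have hle (z : ℤ) (h₁ : a ≤ z) (h₂ : z < y) : f z ≤ f M :=
    (hMmax z (Finset.mem_Ico.2 ⟨h₁, h₂⟩)).1
  have hlt (z : ℤ) (h₁ : M < z) (h₂ : z < y) : f z < f M :=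
    (hMmax z (Finset.mem_Ico.2 ⟨by omega, h₂⟩)).2 h₁
  have hCM : f a + C ≤ f M := hfm.trans (hle m (Finset.mem_Ico.1 hm).1 (Finset.mem_Ico.1 hm).2)
  have haM : a < M := by
    by_contra! h
    have := hlt (a + 1) (by omega) (by omega)
    rw [show M = a by omega] at this
    linarith
  have hreflect : y ≤ 2 * M - a := by
    by_contra! h
    have := hf.two_mul_le (M := M) ⟨le_rfl, by omega⟩ ⟨by omega, by omega⟩
      (show a + (2 * M - a) = 2 * M by ring)
    linarith [hlt (2 * M - a) (by omega) h]
  have := hf.two_mul_le (M := M) ⟨by omega, by omega⟩ ⟨by omega, le_rfl⟩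
    (show 2 * M - y + y = 2 * M by ring)
  linarith [hle (2 * M - y) (by omega) (by omega)]

end AmesoOn

/-- Theorem 1 (global optimizer, right): if `f(x0)` is the minimum of `f` on `[xs, x0+b]`
and `f(x0) + C ≤ max_{[x0, x0+b]} f`, then `f(x0)` is the minimum of `f` on `[xs, xt]`. -/
theorem ameso_global_optimizer_right
    (xs xt : ℤ) (C : ℝ) (f : ℤ → ℝ)
    (hAmeso : ∀ x ∈ Finset.Icc xs xt, ∀ y ∈ Finset.Icc xs xt,
      f x + f y + C ≥ f (mceil x y) + f (mfloor x y))
    (x0 : ℤ) (hx0l : xs ≤ x0) (hx0r : x0 ≤ xt)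
    (b : ℤ) (hb : 0 < b)
    (hmin : f x0 = (Finset.Icc xs (x0 + b)).inf' (Finset.nonempty_Icc.2 (by omega)) f)
    (hmax : f x0 + C ≤ (Finset.Icc x0 (x0 + b)).sup' (Finset.nonempty_Icc.2 (by omega)) f) :
    f x0 = (Finset.Icc xs xt).inf' (Finset.nonempty_Icc.2 (by omega)) f := by
  have hf : AmesoOn C f (Set.Icc xs xt) :=
    fun x hx y hy => hAmeso x (Finset.mem_Icc.2 hx) y (Finset.mem_Icc.2 hy)
  have hwindow (z : ℤ) (h₁ : xs ≤ z) (h₂ : z ≤ x0 + b) : f x0 ≤ f z :=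
    hmin ▸ Finset.inf'_le f (Finset.mem_Icc.2 ⟨h₁, h₂⟩)
  obtain ⟨m, hm, hfm⟩ :=
    Finset.exists_mem_eq_sup' (Finset.nonempty_Icc.2 (show x0 ≤ x0 + b by omega)) f
  rw [hfm] at hmax
  rw [Finset.mem_Icc] at hm
  refine le_antisymm (Finset.le_inf' _ _ fun y hy => ?_)
    (Finset.inf'_le f (Finset.mem_Icc.2 ⟨hx0l, hx0r⟩))
  rw [Finset.mem_Icc] at hy
  by_cases hyb : y ≤ x0 + b
  · exact hwindow y hy.1 hyb
  · exact (hf.mono (Set.Icc_subset_Icc hx0l hy.2)).apply_left_le_apply_right (by omega)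
      (hwindow (x0 + 1) (by omega) (by omega)) (Finset.mem_Ico.2 ⟨hm.1, by omega⟩) hmax
end

section
/- Let W, w1, w2, w3, c1, c2, c3 be positive integers with w1 < w2 < w3, c1 < c2 < c3, and c1/w1 > c2/w2 > c3/w3 (as rational numbers). Define the cost K : ℤ × ℤ → ℤ by K(z1, z2) = c1·z1 + c2·z2 + c3·⌈(W − w1·z1 − w2·z2)/w3⌉, where ⌈·⌉ is the ceiling of the rational argument, and let D = {(z1, z2) ∈ ℤ × ℤ : z1 ≥ 0, z2 ≥ 0, 2·w1·z1 ≤ W, 2·w2·z2 ≤ W}. Then: (i) for all (z1,z2), (z1',z2') ∈ D, the points (⌈(z1+z1')/2⌉, ⌈(z2+z2')/2⌉) and (⌊(z1+z1')/2⌋, ⌊(z2+z2')/2⌋) belong to D; and (ii) for all (z1,z2), (z1',z2') ∈ D, K(z1,z2) + K(z1',z2') + c3 ≥ K(⌈(z1+z1')/2⌉, ⌈(z2+z2')/2⌉) + K(⌊(z1+z1')/2⌋, ⌊(z2+z2')/2⌋). In other words, minimizing K over D is an Ameso(c3) optimization problem. -/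
/-- The shipping cost `K(z1, z2) = c1 z1 + c2 z2 + c3 ⌈(W - w1 z1 - w2 z2)/w3⌉`. -/
def shipCost (W w1 w2 w3 c1 c2 c3 z1 z2 : ℤ) : ℤ :=
  c1 * z1 + c2 * z2 + c3 * ⌈((W : ℚ) - (w1 : ℚ) * (z1 : ℚ) - (w2 : ℚ) * (z2 : ℚ)) / (w3 : ℚ)⌉

/-- The feasible region `D = {(z1, z2) : z1 ≥ 0, z2 ≥ 0, 2 w1 z1 ≤ W, 2 w2 z2 ≤ W}`. -/
def shipDom (W w1 w2 : ℤ) (z1 z2 : ℤ) : Prop :=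
  0 ≤ z1 ∧ 0 ≤ z2 ∧ 2 * w1 * z1 ≤ W ∧ 2 * w2 * z2 ≤ W

/-!
Both midpoints of `x` and `y` lie between `x` and `y`, and the domain is cut out by constraints
that are affine in each coordinate separately, so it contains them. The two midpoints also add
up to `x + y`, so the linear part of the cost is unchanged and the arguments of the ceiling in
the cost have the same sum before and after. For numbers with a fixed sum, the sum of their
ceilings varies by at most one, which costs at most `c3`.
-/

lemma mfloor_eq (x y : ℤ) : mfloor x y = (x + y) / 2 := by
  have : ((x : ℚ) + y) / 2 = ((x + y : ℤ) : ℚ) / ((2 : ℕ) : ℚ) := by push_cast; ring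
  rw [mfloor, this, Rat.floor_intCast_div_natCast]
  norm_num

lemma mceil_eq (x y : ℤ) : mceil x y = -(-(x + y) / 2) := by
  have : ((x : ℚ) + y) / 2 = -(((-(x + y) : ℤ) : ℚ) / ((2 : ℕ) : ℚ)) := by push_cast; ring
  rw [mceil, this, Int.ceil_neg, Rat.floor_intCast_div_natCast]
  norm_num

lemma mceil_add_mfloor (x y : ℤ) : mceil x y + mfloor x y = x + y := by
  rw [mceil_eq, mfloor_eq]
  omega

lemma mceil_mem_uIcc (x y : ℤ) : mceil x y ∈ Set.uIcc x y := by
  rw [Set.mem_uIcc, mceil_eq]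
  omega

lemma mfloor_mem_uIcc (x y : ℤ) : mfloor x y ∈ Set.uIcc x y := by
  rw [Set.mem_uIcc, mfloor_eq]
  omega

lemma mul_le_of_mem_uIcc {a b x y t : ℤ} (hx : a * x ≤ b) (hy : a * y ≤ b)
    (ht : t ∈ Set.uIcc x y) : a * t ≤ b := by
  rcases Set.mem_uIcc.1 ht with ⟨hxt, hty⟩ | ⟨hyt, htx⟩ <;>
    rcases le_total 0 a with ha | ha <;> nlinarith

lemma shipDom_of_mem_uIcc {W w1 w2 z1 z2 z1' z2' t1 t2 : ℤ}
    (h : shipDom W w1 w2 z1 z2) (h' : shipDom W w1 w2 z1' z2')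
    (ht1 : t1 ∈ Set.uIcc z1 z1') (ht2 : t2 ∈ Set.uIcc z2 z2') : shipDom W w1 w2 t1 t2 := by
  obtain ⟨h1, h2, h3, h4⟩ := h
  obtain ⟨h1', h2', h3', h4'⟩ := h'
  refine ⟨?_, ?_, mul_le_of_mem_uIcc h3 h3' ht1, mul_le_of_mem_uIcc h4 h4' ht2⟩
  · rcases Set.mem_uIcc.1 ht1 with h | h <;> omega
  · rcases Set.mem_uIcc.1 ht2 with h | h <;> omega

lemma Int.ceil_add_ceil_le_of_add_eq {α : Type*} [Field α] [LinearOrder α]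
    [IsStrictOrderedRing α] [FloorRing α] {s s' t t' : α} (h : t + t' = s + s') :
    ⌈t⌉ + ⌈t'⌉ ≤ ⌈s⌉ + ⌈s'⌉ + 1 := by
  have hlt : ((⌈t⌉ + ⌈t'⌉ : ℤ) : α) < ((⌈s⌉ + ⌈s'⌉ + 2 : ℤ) : α) := by
    push_cast
    linarith [Int.ceil_lt_add_one t, Int.ceil_lt_add_one t', Int.le_ceil s, Int.le_ceil s']
  have := Int.cast_lt.1 hlt
  omega

lemma shipCost_add_shipCost_le {W w1 w2 w3 c1 c2 c3 z1 z2 z1' z2' a b a' b' : ℤ}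
    (hc3 : 0 ≤ c3) (ha : a + a' = z1 + z1') (hb : b + b' = z2 + z2') :
    shipCost W w1 w2 w3 c1 c2 c3 a b + shipCost W w1 w2 w3 c1 c2 c3 a' b' ≤
      shipCost W w1 w2 w3 c1 c2 c3 z1 z2 + shipCost W w1 w2 w3 c1 c2 c3 z1' z2' + c3 := by
  have haq : (a : ℚ) + a' = z1 + z1' := by exact_mod_cast ha
  have hbq : (b : ℚ) + b' = z2 + z2' := by exact_mod_cast hb
  have hceil := Int.ceil_add_ceil_le_of_add_eq (α := ℚ)
    (t := (W - w1 * a - w2 * b) / w3) (t' := (W - w1 * a' - w2 * b') / w3)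
    (s := (W - w1 * z1 - w2 * z2) / w3) (s' := (W - w1 * z1' - w2 * z2') / w3) (by
      rw [← add_div, ← add_div]
      linear_combination (-(w1 : ℚ) * haq - w2 * hbq) / w3)
  unfold shipCost
  linear_combination c1 * ha + c2 * hb + mul_le_mul_of_nonneg_left hceil hc3

theorem knapsack_is_ameso_general
    (W w1 w2 w3 c1 c2 c3 : ℤ)
    (hc3 : 0 < c3) :
    (∀ z1 z2 z1' z2' : ℤ, shipDom W w1 w2 z1 z2 → shipDom W w1 w2 z1' z2' →
      shipDom W w1 w2 (mceil z1 z1') (mceil z2 z2') ∧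
      shipDom W w1 w2 (mfloor z1 z1') (mfloor z2 z2')) ∧
    (∀ z1 z2 z1' z2' : ℤ, shipDom W w1 w2 z1 z2 → shipDom W w1 w2 z1' z2' →
      shipCost W w1 w2 w3 c1 c2 c3 z1 z2 + shipCost W w1 w2 w3 c1 c2 c3 z1' z2' + c3 ≥
        shipCost W w1 w2 w3 c1 c2 c3 (mceil z1 z1') (mceil z2 z2') +
        shipCost W w1 w2 w3 c1 c2 c3 (mfloor z1 z1') (mfloor z2 z2')) := by
  refine ⟨fun z1 z2 z1' z2' h h' => ⟨?_, ?_⟩, fun z1 z2 z1' z2' _ _ => ?_⟩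
  · exact shipDom_of_mem_uIcc h h' (mceil_mem_uIcc z1 z1') (mceil_mem_uIcc z2 z2')
  · exact shipDom_of_mem_uIcc h h' (mfloor_mem_uIcc z1 z1') (mfloor_mem_uIcc z2 z2')
  · exact shipCost_add_shipCost_le hc3.le (mceil_add_mfloor z1 z1') (mceil_add_mfloor z2 z2')

/-- Theorem 5: the knapsack shipping problem is an Ameso(c3) optimization problem:
the domain is an Ameso set, and the cost satisfies the Ameso(c3) inequality. -/
theorem knapsack_is_ameso
    (W w1 w2 w3 c1 c2 c3 : ℤ)
    (hW : 0 < W) (hw1 : 0 < w1) (hw2 : 0 < w2) (hw3 : 0 < w3)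
    (hc1 : 0 < c1) (hc2 : 0 < c2) (hc3 : 0 < c3)
    (hw12 : w1 < w2) (hw23 : w2 < w3) (hc12 : c1 < c2) (hc23 : c2 < c3)
    (hr12 : (c1 : ℚ) / (w1 : ℚ) > (c2 : ℚ) / (w2 : ℚ))
    (hr23 : (c2 : ℚ) / (w2 : ℚ) > (c3 : ℚ) / (w3 : ℚ)) :
    (∀ z1 z2 z1' z2' : ℤ, shipDom W w1 w2 z1 z2 → shipDom W w1 w2 z1' z2' →
      shipDom W w1 w2 (mceil z1 z1') (mceil z2 z2') ∧
      shipDom W w1 w2 (mfloor z1 z1') (mfloor z2 z2')) ∧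
    (∀ z1 z2 z1' z2' : ℤ, shipDom W w1 w2 z1 z2 → shipDom W w1 w2 z1' z2' →
      shipCost W w1 w2 w3 c1 c2 c3 z1 z2 + shipCost W w1 w2 w3 c1 c2 c3 z1' z2' + c3 ≥
        shipCost W w1 w2 w3 c1 c2 c3 (mceil z1 z1') (mceil z2 z2') +
        shipCost W w1 w2 w3 c1 c2 c3 (mfloor z1 z1') (mfloor z2 z2')) :=
  knapsack_is_ameso_general W w1 w2 w3 c1 c2 c3 hc3
end

section
/- Let n and j be positive integers with j ≤ n, let D₁, …, Dₙ be nonempty subsets of ℤ each closed under taking ⌈(x+y)/2⌉ and ⌊(x+y)/2⌋ of any two of its elements, and let Dⁿ = D₁ × ⋯ × Dₙ ⊆ ℤⁿ. Let C ≥ 0 and let f : ℤⁿ → ℝ be bounded below on Dⁿ and satisfy f(x) + f(y) + C ≥ f(⌈(x+y)/2⌉) + f(⌊(x+y)/2⌋) for all x, y ∈ Dⁿ, where the ceiling and floor of (x+y)/2 are taken componentwise. Fix distinct indices i₁, …, i_j in {1,…,n}, let Δ = D_{i₁} × ⋯ × D_{i_j}, and define f* : Δ → ℝ by f*(x_{i₁},…,x_{i_j})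 = inf { f(y) : y ∈ Dⁿ, y_{i_k} = x_{i_k} for k = 1,…,j }. Then (Δ, f*) is a j-dimensional Ameso(C) pair: Δ is closed under componentwise ⌈(u+v)/2⌉ and ⌊(u+v)/2⌋, f* is bounded below on Δ, and f*(u) + f*(v) + C ≥ f*(⌈(u+v)/2⌉) + f*(⌊(u+v)/2⌋) for all u, v ∈ Δ. -/
theorem le_sInf_image_add_sInf_image {α γ : Type*} [ConditionallyCompleteLattice α] [AddGroup α]
    [AddLeftMono α] [AddRightMono α] {S T : Set γ} (hS : S.Nonempty) (hT : T.Nonempty)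
    {g : γ → α} {a : α} (h : ∀ x ∈ S, ∀ y ∈ T, a ≤ g x + g y) :
    a ≤ sInf (g '' S) + sInf (g '' T) := by
  have := hS.to_subtype
  have := hT.to_subtype
  rw [sInf_image', sInf_image']
  exact le_ciInf_add_ciInf fun x y => h x x.2 y y.2

section Fiber

variable {α β V : Type*} (D : α → Set V) (ι : β → α)

def fiber (u : β → V) : Set (α → V) :=
  {y | (∀ i, y i ∈ D i) ∧ ∀ k, y (ι k) = u k}

variable {D ι}

theorem fiber_nonempty (hι : Function.Injective ι) (hD : ∀ i, (D i).Nonempty) {u : β → V}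
    (hu : ∀ k, u k ∈ D (ι k)) : (fiber D ι u).Nonempty := by
  refine ⟨Function.extend ι u fun i => (hD i).some, fun i => ?_, fun k => hι.extend_apply _ _ k⟩
  by_cases hi : ∃ k, ι k = i
  · obtain ⟨k, rfl⟩ := hi
    rw [hι.extend_apply]
    exact hu k
  · rw [Function.extend_apply' _ _ _ hi]
    exact (hD i).some_mem

theorem map₂_mem_fiber {m : V → V → V} (hm : ∀ i, ∀ a ∈ D i, ∀ b ∈ D i, m a b ∈ D i)
    {u v : β → V} {x y : α → V} (hx : x ∈ fiber D ι u) (hy : y ∈ fiber D ι v) :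
    (fun i => m (x i) (y i)) ∈ fiber D ι fun k => m (u k) (v k) :=
  ⟨fun i => hm i _ (hx.1 i) _ (hy.1 i), fun k => by simp only [hx.2 k, hy.2 k]⟩

theorem mem_lowerBounds_image_fiber {f : (α → V) → ℝ} {B : ℝ}
    (hB : ∀ x : α → V, (∀ i, x i ∈ D i) → B ≤ f x) (u : β → V) :
    B ∈ lowerBounds (f '' fiber D ι u) := by
  rintro _ ⟨y, hy, rfl⟩
  exact hB y hy.1

end Fiber

theorem conditional_pair_is_ameso_general
    (n j : ℕ)
    (D : Fin n → Set ℤ)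
    (hDne : ∀ i, (D i).Nonempty)
    (hDclosed : ∀ i, ∀ x ∈ D i, ∀ y ∈ D i, mceil x y ∈ D i ∧ mfloor x y ∈ D i)
    (C : ℝ)
    (f : (Fin n → ℤ) → ℝ)
    (B : ℝ) (hB : ∀ x : Fin n → ℤ, (∀ i, x i ∈ D i) → B ≤ f x)
    (hAmeso : ∀ x y : Fin n → ℤ, (∀ i, x i ∈ D i) → (∀ i, y i ∈ D i) →
      f x + f y + C ≥ f (fun i => mceil (x i) (y i)) + f (fun i => mfloor (x i) (y i)))
    (ι : Fin j → Fin n) (hι : Function.Injective ι)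
    (fstar : (Fin j → ℤ) → ℝ)
    (hfstar : ∀ u : Fin j → ℤ,
      fstar u = sInf (f '' {y : Fin n → ℤ | (∀ i, y i ∈ D i) ∧ ∀ k, y (ι k) = u k})) :
    (∀ u v : Fin j → ℤ, (∀ k, u k ∈ D (ι k)) → (∀ k, v k ∈ D (ι k)) →
      (∀ k, mceil (u k) (v k) ∈ D (ι k)) ∧ (∀ k, mfloor (u k) (v k) ∈ D (ι k))) ∧
    (∃ B' : ℝ, ∀ u : Fin j → ℤ, (∀ k, u k ∈ D (ι k)) → B' ≤ fstar u) ∧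
    (∀ u v : Fin j → ℤ, (∀ k, u k ∈ D (ι k)) → (∀ k, v k ∈ D (ι k)) →
      fstar u + fstar v + C ≥
        fstar (fun k => mceil (u k) (v k)) + fstar (fun k => mfloor (u k) (v k))) := by
  have hfstar_fiber (u : Fin j → ℤ) : fstar u = sInf (f '' fiber D ι u) := hfstar u
  have hfstar_le {u : Fin j → ℤ} {y : Fin n → ℤ} (hy : y ∈ fiber D ι u) : fstar u ≤ f y := by
    rw [hfstar_fiber]
    exact csInf_le ⟨B, mem_lowerBounds_image_fiber hB u⟩ (Set.mem_image_of_mem f hy)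
  refine ⟨fun u v hu hv => ⟨fun k => (hDclosed _ _ (hu k) _ (hv k)).1,
    fun k => (hDclosed _ _ (hu k) _ (hv k)).2⟩, ⟨B, fun u hu => ?_⟩, fun u v hu hv => ?_⟩
  · rw [hfstar_fiber]
    exact le_csInf ((fiber_nonempty hι hDne hu).image f) (mem_lowerBounds_image_fiber hB u)
  · have key : ∀ x ∈ fiber D ι u, ∀ y ∈ fiber D ι v,
        fstar (fun k => mceil (u k) (v k)) + fstar (fun k => mfloor (u k) (v k)) - C ≤
          f x + f y := by
      intro x hx y hy
      have hceil := hfstar_le (map₂_mem_fiber (fun i a ha b hb => (hDclosed i a ha b hb).1) hx hy)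
      have hfloor := hfstar_le (map₂_mem_fiber (fun i a ha b hb => (hDclosed i a ha b hb).2) hx hy)
      linarith [hAmeso x y hx.1 hy.1]
    have := le_sInf_image_add_sInf_image (fiber_nonempty hι hDne hu) (fiber_nonempty hι hDne hv) key
    rw [← hfstar_fiber, ← hfstar_fiber] at this
    linarith

/-- Property 5: the conditional pair of an `n`-dimensional Ameso(C) pair on a product
domain `D₁ × ⋯ × Dₙ` is a `j`-dimensional Ameso(C) pair.  The `j` fixed coordinates are
given by an injection `ι : Fin j → Fin n`; the conditional function `fstar` is the
infimum of `f` over the fiber where the chosen coordinates are fixed. -/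
theorem conditional_pair_is_ameso
    (n j : ℕ) (hn : 0 < n) (hj : 0 < j) (hjn : j ≤ n)
    (D : Fin n → Set ℤ)
    (hDne : ∀ i, (D i).Nonempty)
    (hDclosed : ∀ i, ∀ x ∈ D i, ∀ y ∈ D i, mceil x y ∈ D i ∧ mfloor x y ∈ D i)
    (C : ℝ) (hC : 0 ≤ C)
    (f : (Fin n → ℤ) → ℝ)
    (B : ℝ) (hB : ∀ x : Fin n → ℤ, (∀ i, x i ∈ D i) → B ≤ f x)
    (hAmeso : ∀ x y : Fin n → ℤ, (∀ i, x i ∈ D i) → (∀ i, y i ∈ D i) →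
      f x + f y + C ≥ f (fun i => mceil (x i) (y i)) + f (fun i => mfloor (x i) (y i)))
    (ι : Fin j → Fin n) (hι : Function.Injective ι)
    (fstar : (Fin j → ℤ) → ℝ)
    (hfstar : ∀ u : Fin j → ℤ,
      fstar u = sInf (f '' {y : Fin n → ℤ | (∀ i, y i ∈ D i) ∧ ∀ k, y (ι k) = u k})) :
    (∀ u v : Fin j → ℤ, (∀ k, u k ∈ D (ι k)) → (∀ k, v k ∈ D (ι k)) →
      (∀ k, mceil (u k) (v k) ∈ D (ι k)) ∧ (∀ k, mfloor (u k) (v k) ∈ D (ι k))) ∧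
    (∃ B' : ℝ, ∀ u : Fin j → ℤ, (∀ k, u k ∈ D (ι k)) → B' ≤ fstar u) ∧
    (∀ u v : Fin j → ℤ, (∀ k, u k ∈ D (ι k)) → (∀ k, v k ∈ D (ι k)) →
      fstar u + fstar v + C ≥
        fstar (fun k => mceil (u k) (v k)) + fstar (fun k => mfloor (u k) (v k))) :=
  conditional_pair_is_ameso_general n j D hDne hDclosed C f B hB hAmeso ι hι fstar hfstar
end
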